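/- arXiv:math/0111093 — 4 statements merged into one kernel-verified Lean document; each statement's English description precedes it below -/
import Mathlib

section
/- Let β ∈ (0,1) be irrational with eventually periodic continued fraction expansion, i.e. there exist N ≥ 1 and ℓ ≥ 1 such that a_{n+ℓ}(β) = a_n(β) for all n ≥ N. Then the Lyapunov exponent λ(β) = lim_{n→∞} (2/n) Σ_{k=0}^{n−1} log(1/T^k(β)) exists and satisfies λ(β) ≥ 2 log((1+√5)/2). -/
open Filter Topology

/-- The Gauss map `T : [0,1] → [0,1]`, `T 0 = 0`, `T x = 1/x - ⌊1/x⌋`. -/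
noncomputable def gaussMap (x : ℝ) : ℝ := if x = 0 then 0 else 1 / x - ⌊1 / x⌋

/-- `cfa β n = a_{n+1}(β) = ⌊1 / T^n β⌋`, the partial quotients of the
continued fraction expansion of `β`. -/
noncomputable def cfa (β : ℝ) (n : ℕ) : ℤ := ⌊1 / (gaussMap^[n] β)⌋

/-- `pNum β (n+1) = p_n(β)`: the numerators of the convergents,
with `p_{-1} = 1`, `p_0 = 0`, `p_n = a_n p_{n-1} + p_{n-2}`. -/
noncomputable def pNum (β : ℝ) : ℕ → ℤ
  | 0 => 1
  | 1 => 0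
  | n + 2 => cfa β n * pNum β (n + 1) + pNum β n

/-- `qDen β (n+1) = q_n(β)`: the denominators of the convergents,
with `q_{-1} = 0`, `q_0 = 1`, `q_n = a_n q_{n-1} + q_{n-2}`. -/
noncomputable def qDen (β : ℝ) : ℕ → ℤ
  | 0 => 0
  | 1 => 1
  | n + 2 => cfa β n * qDen β (n + 1) + qDen β n

/-- The `n`-th Birkhoff average whose limit is the Lyapunov exponent of the
Gauss map at `β`:  `(2/n) ∑_{k=0}^{n-1} log (1 / T^k β)`. -/
noncomputable def lyapAvg (β : ℝ) (n : ℕ) : ℝ :=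
  (2 / (n : ℝ)) * ∑ k ∈ Finset.range n, Real.log (1 / gaussMap^[k] β)


/-! Write `xₖ = Tᵏ x`. From `xₖ xₖ₊₁ = 1 - aₖ₊₁ xₖ` one gets `x₀ ⋯ xₙ₋₁ = 1 / (qₙ + xₙ qₙ₋₁)`,
and `qₙ ≥ φⁿ⁻¹` because all partial quotients are at least `1`. Hence the Birkhoff average
`-(2/n) log (x₀ ⋯ xₙ₋₁)` is at least `2 log φ - 2 log φ / n` for every irrational `x ∈ (0,1)`.
The same product bounds `|x - y|` when `x` and `y` share their partial quotients, so the digits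
determine the number: eventually periodic digits make the orbit eventually periodic, and the
averages of an eventually periodic sequence converge to its mean over one period. -/

open Function Set Finset Real goldenRatio

def unitIrrationals : Set ℝ := {x | Irrational x} ∩ Ioo 0 1

theorem gaussMap_of_ne_zero {x : ℝ} (hx : x ≠ 0) : gaussMap x = Int.fract (1 / x) :=
  if_neg hx

theorem mul_gaussMap {x : ℝ} (hx : x ≠ 0) : x * gaussMap x = 1 - ⌊1 / x⌋ * x := by
  rw [gaussMap_of_ne_zero hx, Int.fract]
  field_simp

theorem sub_eq_mul_mul_gaussMap_sub {x y : ℝ} (hx : x ≠ 0) (hy : y ≠ 0)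
    (h : ⌊1 / x⌋ = ⌊1 / y⌋) : x - y = x * y * (gaussMap y - gaussMap x) := by
  rw [gaussMap_of_ne_zero hx, gaussMap_of_ne_zero hy, Int.fract, Int.fract, h]
  field_simp
  ring

theorem mapsTo_gaussMap : MapsTo gaussMap unitIrrationals unitIrrationals := by
  rintro x ⟨hirr, hx0, -⟩
  have hfract : Irrational (Int.fract (1 / x)) := by
    rw [Int.fract, one_div]
    exact hirr.inv.sub_intCast _
  rw [gaussMap_of_ne_zero hx0.ne']
  exact ⟨hfract, (Int.fract_nonneg _).lt_of_ne (fun h ↦ hfract ⟨0, by simp [h]⟩),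
    Int.fract_lt_one _⟩

theorem iterate_gaussMap_mem {x : ℝ} (hx : x ∈ unitIrrationals) (n : ℕ) :
    gaussMap^[n] x ∈ unitIrrationals :=
  mapsTo_gaussMap.iterate n hx

theorem cfa_iterate (x : ℝ) (j k : ℕ) : cfa (gaussMap^[j] x) k = cfa x (k + j) := by
  rw [cfa, cfa, iterate_add_apply]

theorem one_le_cfa {x : ℝ} (hx : x ∈ unitIrrationals) (n : ℕ) : 1 ≤ cfa x n := by
  obtain ⟨-, hpos, hlt⟩ := iterate_gaussMap_mem hx n
  exact Int.le_floor.2 (by simpa using (one_le_div hpos).2 hlt.le)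

/-- With `qDen x (n + 1) = qₙ`, this is `x₀ ⋯ xₙ₋₁ (qₙ + xₙ qₙ₋₁) = 1`. -/
theorem prod_iterate_gaussMap_mul_qDen {x : ℝ} (hx : ∀ k, gaussMap^[k] x ≠ 0) (n : ℕ) :
    (∏ k ∈ range n, gaussMap^[k] x) * (qDen x (n + 1) + gaussMap^[n] x * qDen x n) = 1 := by
  induction n with
  | zero => simp [qDen]
  | succ n ih =>
    have hmul : gaussMap^[n] x * gaussMap^[n + 1] x = 1 - cfa x n * gaussMap^[n] x := by
      rw [iterate_succ_apply']
      exact mul_gaussMap (hx n)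
    simp only [prod_range_succ, qDen, Int.cast_add, Int.cast_mul]
    linear_combination ih + (∏ k ∈ range n, gaussMap^[k] x) * qDen x (n + 1) * hmul

theorem goldenRatio_pow_le_mul_qDen {x : ℝ} (ha : ∀ k, 1 ≤ cfa x k) :
    ∀ n, φ ^ n ≤ φ * qDen x (n + 1)
  | 0 => by simpa [qDen] using one_lt_goldenRatio.le
  | 1 => by
    have ha₀ : (1 : ℝ) ≤ cfa x 0 := by exact_mod_cast ha 0
    simpa [qDen] using (le_mul_iff_one_le_right goldenRatio_pos).2 ha₀
  | n + 2 => by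
    have h₀ := goldenRatio_pow_le_mul_qDen ha n
    have h₁ := goldenRatio_pow_le_mul_qDen ha (n + 1)
    have ha' : (1 : ℝ) ≤ cfa x (n + 1) := by exact_mod_cast ha (n + 1)
    have hq : (0 : ℝ) ≤ qDen x (n + 2) :=
      nonneg_of_mul_nonneg_right ((pow_pos goldenRatio_pos _).le.trans h₁) goldenRatio_pos
    have hrec : (qDen x (n + 3) : ℝ) = cfa x (n + 1) * qDen x (n + 2) + qDen x (n + 1) := by
      simp [qDen]
    have hφ := goldenRatio_pow_sub_goldenRatio_pow n
    rw [hrec]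
    nlinarith [mul_nonneg goldenRatio_pos.le (mul_nonneg (sub_nonneg.2 ha') hq)]

theorem prod_iterate_gaussMap_le {x : ℝ} (hx : x ∈ unitIrrationals) (n : ℕ) :
    ∏ k ∈ range n, gaussMap^[k] x ≤ φ / φ ^ n := by
  have hmem := iterate_gaussMap_mem hx
  have hprod : 0 < ∏ k ∈ range n, gaussMap^[k] x := prod_pos fun k _ ↦ (hmem k).2.1
  have hq : (0 : ℝ) ≤ qDen x n := by
    cases n with
    | zero => simp [qDen]
    | succ m =>
      have h := goldenRatio_pow_le_mul_qDen (one_le_cfa hx) m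
      exact nonneg_of_mul_nonneg_right ((pow_pos goldenRatio_pos _).le.trans h) goldenRatio_pos
  have hid := prod_iterate_gaussMap_mul_qDen (fun k ↦ (hmem k).2.1.ne') n
  have hφ := goldenRatio_pow_le_mul_qDen (one_le_cfa hx) n
  rw [le_div_iff₀ (pow_pos goldenRatio_pos n)]
  calc (∏ k ∈ range n, gaussMap^[k] x) * φ ^ n
      ≤ (∏ k ∈ range n, gaussMap^[k] x) * (φ * (qDen x (n + 1) + gaussMap^[n] x * qDen x n)) := by
        gcongr
        nlinarith [mul_nonneg (mul_nonneg goldenRatio_pos.le (hmem n).2.1.le) hq]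
    _ = φ := by linear_combination φ * hid

theorem tendsto_prod_iterate_gaussMap {x : ℝ} (hx : x ∈ unitIrrationals) :
    Tendsto (fun n ↦ ∏ k ∈ range n, gaussMap^[k] x) atTop (𝓝 0) :=
  squeeze_zero (fun _ ↦ (prod_pos fun k _ ↦ (iterate_gaussMap_mem hx k).2.1).le)
    (prod_iterate_gaussMap_le hx)
    (tendsto_const_nhds.div_atTop (tendsto_pow_atTop_atTop_of_one_lt one_lt_goldenRatio))

theorem abs_sub_le_prod_iterate_gaussMap {x y : ℝ} (hx : x ∈ unitIrrationals)
    (hy : y ∈ unitIrrationals) (hxy : ∀ k, cfa x k = cfa y k) (n : ℕ) :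
    |x - y| ≤ ∏ k ∈ range n, gaussMap^[k] x := by
  induction n generalizing x y with
  | zero =>
    rw [prod_range_zero]
    exact (abs_sub_lt_iff.2 ⟨by linarith [hx.2.2, hy.2.1], by linarith [hx.2.1, hy.2.2]⟩).le
  | succ n ih =>
    have hshift : ∀ k, cfa (gaussMap x) k = cfa (gaussMap y) k := fun k ↦ by
      simpa only [← cfa_iterate, iterate_one] using hxy (k + 1)
    have hstep := sub_eq_mul_mul_gaussMap_sub hx.2.1.ne' hy.2.1.ne' (hxy 0)
    calc |x - y| = x * y * |gaussMap x - gaussMap y| := by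
          rw [hstep, abs_mul, abs_sub_comm, abs_of_pos (mul_pos hx.2.1 hy.2.1)]
      _ ≤ x * |gaussMap x - gaussMap y| := by
          gcongr
          exact mul_le_of_le_one_right hx.2.1.le hy.2.2.le
      _ ≤ x * ∏ k ∈ range n, gaussMap^[k] (gaussMap x) := by
          exact mul_le_mul_of_nonneg_left (ih (mapsTo_gaussMap hx) (mapsTo_gaussMap hy) hshift)
            hx.2.1.le
      _ = ∏ k ∈ range (n + 1), gaussMap^[k] x := by
          simp only [prod_range_succ', iterate_succ_apply, iterate_zero_apply, mul_comm]

theorem eq_of_cfa_eq {x y : ℝ} (hx : x ∈ unitIrrationals) (hy : y ∈ unitIrrationals)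
    (hxy : ∀ k, cfa x k = cfa y k) : x = y := by
  have h : |x - y| ≤ 0 :=
    ge_of_tendsto' (tendsto_prod_iterate_gaussMap hx) (abs_sub_le_prod_iterate_gaussMap hx hy hxy)
  exact sub_eq_zero.1 (abs_nonpos_iff.1 h)

theorem iterate_gaussMap_add_eq {x : ℝ} (hx : x ∈ unitIrrationals) {M ℓ : ℕ}
    (hper : ∀ m, M ≤ m → cfa x (m + ℓ) = cfa x m) {k : ℕ} (hk : M ≤ k) :
    gaussMap^[k + ℓ] x = gaussMap^[k] x := by
  have hpt : gaussMap^[ℓ] (gaussMap^[M] x) = gaussMap^[M] x := by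
    have hM := iterate_gaussMap_mem hx M
    refine eq_of_cfa_eq (iterate_gaussMap_mem hM ℓ) hM fun j ↦ ?_
    rw [← iterate_add_apply, cfa_iterate, cfa_iterate, ← hper (j + M) (by omega)]
    congr 1
    omega
  obtain ⟨j, rfl⟩ := Nat.exists_eq_add_of_le' hk
  rw [show j + M + ℓ = j + (ℓ + M) by ring, iterate_add_apply, iterate_add_apply, hpt,
    ← iterate_add_apply]

theorem finite_range_of_eventually_periodic {α : Type*} {h : ℕ → α} {M ℓ : ℕ} (hℓ : 0 < ℓ)
    (hper : ∀ n, M ≤ n → h (n + ℓ) = h n) : (Set.range h).Finite := by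
  have hshift : Periodic (fun k ↦ h (M + k)) ℓ := fun k ↦ by
    simpa only [add_assoc] using hper (M + k) (Nat.le_add_right M k)
  refine ((Finset.range (M + ℓ)).finite_toSet.image h).subset ?_
  rintro _ ⟨n, rfl⟩
  rcases lt_or_ge n M with hn | hn
  · exact ⟨n, by simpa using by omega, rfl⟩
  · obtain ⟨k, rfl⟩ := Nat.exists_eq_add_of_le hn
    exact ⟨M + k % ℓ, by simpa using Nat.mod_lt k hℓ, hshift.map_mod_nat k⟩

theorem tendsto_average_of_eventually_periodic {g : ℕ → ℝ} {M ℓ : ℕ} (hℓ : 0 < ℓ)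
    (hper : ∀ n, M ≤ n → g (n + ℓ) = g n) :
    Tendsto (fun n : ℕ ↦ (∑ k ∈ range n, g k) / n) atTop
      (𝓝 ((∑ k ∈ range ℓ, g (M + k)) / ℓ)) := by
  set a := (∑ k ∈ range ℓ, g (M + k)) / ℓ
  have hwindow : ∀ n, M ≤ n → ∑ k ∈ range ℓ, g (n + k) = a * ℓ := by
    intro n hn
    induction n, hn using Nat.le_induction with
    | base => rw [div_mul_cancel₀ _ (by positivity)]
    | succ n hn ih =>
      have h₁ := sum_range_succ (fun k ↦ g (n + k)) ℓ
      rw [sum_range_succ', hper n hn] at h₁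
      simp only [add_zero, add_assoc, add_comm 1] at h₁ ⊢
      linarith
  set h : ℕ → ℝ := fun n ↦ ∑ k ∈ range n, g k - n * a
  have hhper : ∀ n, M ≤ n → h (n + ℓ) = h n := fun n hn ↦ by
    simp only [h, sum_range_add, hwindow n hn, Nat.cast_add]
    ring
  obtain ⟨C, hC⟩ := isBounded_iff_forall_norm_le.1
    (finite_range_of_eventually_periodic hℓ hhper).isBounded
  have hsmall : Tendsto (fun n : ℕ ↦ h n / n) atTop (𝓝 0) := by
    refine squeeze_zero_norm (fun n ↦ ?_) (tendsto_const_div_atTop_nhds_zero_nat C)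
    rw [norm_div, RCLike.norm_natCast]
    gcongr
    exact hC _ ⟨n, rfl⟩
  have hdecomp : ∀ᶠ n : ℕ in atTop, a + h n / n = (∑ k ∈ range n, g k) / n := by
    filter_upwards [eventually_ne_atTop 0] with n hn
    field_simp [h]
    ring
  simpa using (tendsto_const_nhds.add hsmall).congr' hdecomp

theorem two_mul_log_goldenRatio_le_of_tendsto_lyapAvg {x l : ℝ} (hx : x ∈ unitIrrationals)
    (hl : Tendsto (lyapAvg x) atTop (𝓝 l)) : 2 * log φ ≤ l := by
  have hbound : ∀ᶠ n : ℕ in atTop, 2 * log φ - 2 * log φ / n ≤ lyapAvg x n := by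
    filter_upwards [eventually_ne_atTop 0] with n hn
    have hlog := log_le_log (prod_pos fun k _ ↦ (iterate_gaussMap_mem hx k).2.1)
      (prod_iterate_gaussMap_le hx n)
    rw [log_div goldenRatio_ne_zero (pow_ne_zero _ goldenRatio_ne_zero), log_pow,
      log_prod fun k _ ↦ (iterate_gaussMap_mem hx k).2.1.ne'] at hlog
    calc 2 * log φ - 2 * log φ / n = 2 / n * (n * log φ - log φ) := by field_simp
      _ ≤ lyapAvg x n := by
        simp only [lyapAvg, one_div, log_inv, sum_neg_distrib]
        gcongr
        linarith
  refine le_of_tendsto_of_tendsto ?_ hl hbound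
  simpa using tendsto_const_nhds.sub (tendsto_const_div_atTop_nhds_zero_nat (2 * log φ))

theorem lyapunov_of_eventually_periodic_general (β : ℝ) (hβ : Irrational β)
    (h0 : 0 < β) (h1 : β < 1)
    (N ℓ : ℕ) (hℓ : 1 ≤ ℓ)
    (hper : ∀ n : ℕ, N ≤ n → cfa β (n - 1 + ℓ) = cfa β (n - 1)) :
    ∃ l : ℝ, Tendsto (lyapAvg β) atTop (𝓝 l) ∧
      2 * Real.log ((1 + Real.sqrt 5) / 2) ≤ l := by
  have hβ' : β ∈ unitIrrationals := ⟨hβ, h0, h1⟩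
  have hcfa : ∀ m, N - 1 ≤ m → cfa β (m + ℓ) = cfa β m := fun m hm ↦ by
    simpa using hper (m + 1) (by omega)
  have hlog : ∀ k, N - 1 ≤ k →
      log (1 / gaussMap^[k + ℓ] β) = log (1 / gaussMap^[k] β) := fun k hk ↦ by
    rw [iterate_gaussMap_add_eq hβ' hcfa hk]
  have hlim : Tendsto (lyapAvg β) atTop (𝓝 (2 * _)) :=
    (tendsto_average_of_eventually_periodic hℓ hlog).const_mul 2 |>.congr fun n ↦ by
      simp only [lyapAvg]
      ring
  exact ⟨_, hlim, two_mul_log_goldenRatio_le_of_tendsto_lyapAvg hβ' hlim⟩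

/-- If `β ∈ (0,1)` is irrational with eventually periodic continued fraction
expansion (`a_{n+ℓ}(β) = a_n(β)` for all `n ≥ N`, where `a_n(β) = cfa β (n-1)`),
then the Lyapunov exponent exists and is at least `2 log((1+√5)/2)`. -/
theorem lyapunov_of_eventually_periodic (β : ℝ) (hβ : Irrational β)
    (h0 : 0 < β) (h1 : β < 1)
    (N ℓ : ℕ) (hN : 1 ≤ N) (hℓ : 1 ≤ ℓ)
    (hper : ∀ n : ℕ, N ≤ n → cfa β (n - 1 + ℓ) = cfa β (n - 1)) :
    ∃ l : ℝ, Tendsto (lyapAvg β) atTop (𝓝 l) ∧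
      2 * Real.log ((1 + Real.sqrt 5) / 2) ≤ l :=
  lyapunov_of_eventually_periodic_general β hβ h0 h1 N ℓ hℓ hper
end

section
/- Let β ∈ (0,1) be irrational and n ≥ 1. Let y_n be the intersection point of the vertical geodesic {z ∈ ℍ : Re z = β} with the semicircular geodesic in the upper half plane with endpoints p_{n−1}(β)/q_{n−1}(β) and p_n(β)/q_n(β); explicitly, Im y_n = √(r² − (β − c)²) with c = (p_{n−1}/q_{n−1} + p_n/q_n)/2 and r = 1/(2 q_{n−1}(β) q_n(β)), this intersection being nonempty since β lies strictly between the two consecutive convergents. Then 1/(2 q_n(β) q_{n+1}(β)) < Im y_n < 1/(2 q_{n−1}(β) q_n(β)). -/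
open Filter Topology

/-!
Put `x = T^n β` and `D_n = q_n + q_{n-1} x`. Then `β = (p_n + p_{n-1} x) / D_n`, so by the
determinant identity `|β - p_{n-1}/q_{n-1}| = 1/(q_{n-1} D_n) =: d` and
`|β - p_n/q_n| = 1/(q_n D_{n+1}) =: d'`, with `D_n = x D_{n+1}`. Since `β` lies between the two
convergents, `d + d'` is their distance `1/(q_{n-1} q_n)` and `(Im y_n)² = d d'` (the height of a
semicircle over a point is the geometric mean of the distances to its endpoints). Finally
`d' < d` and `D_{n+1} < 2 q_{n+1}` give `1/(2 q_n q_{n+1}) < d' < √(d d') < (d + d')/2`.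
Below, `D_n = cfDen β n`, `d = convergentDist β n` and `d' = convergentDist β (n + 1)`.
-/

open Set

lemma gaussMap_eq_fract_inv {x : ℝ} (hx : x ≠ 0) : gaussMap x = Int.fract x⁻¹ := by
  rw [gaussMap, if_neg hx, Int.fract, one_div]

lemma irrational_gaussMap {x : ℝ} (hx : Irrational x) : Irrational (gaussMap x) := by
  rw [gaussMap_eq_fract_inv hx.ne_zero, Int.fract]
  exact hx.inv.sub_intCast _

lemma irrational_gaussMap_iterate {β : ℝ} (hβ : Irrational β) (k : ℕ) :
    Irrational (gaussMap^[k] β) :=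
  Function.Iterate.rec Irrational hβ (fun _ => irrational_gaussMap) k

lemma gaussMap_mem_Ioo_of_irrational {x : ℝ} (hx : Irrational x) : gaussMap x ∈ Ioo 0 1 := by
  rw [gaussMap_eq_fract_inv hx.ne_zero]
  exact ⟨Int.fract_pos.mpr (hx.inv.ne_int _), Int.fract_lt_one _⟩

lemma gaussMap_iterate_mem_Ioo {β : ℝ} (hβ : Irrational β) (h0 : 0 < β) (h1 : β < 1) :
    ∀ k, gaussMap^[k] β ∈ Ioo 0 1
  | 0 => ⟨h0, h1⟩
  | k + 1 => by
    rw [Function.iterate_succ_apply']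
    exact gaussMap_mem_Ioo_of_irrational (irrational_gaussMap_iterate hβ k)

lemma one_le_cfa_s9 {β : ℝ} {k : ℕ} (hx : gaussMap^[k] β ∈ Ioo 0 1) : 1 ≤ cfa β k := by
  refine Int.le_floor.mpr ?_
  rw [Int.cast_one, le_div_iff₀ hx.1]
  linarith [hx.2]

lemma gaussMap_iterate_mul_cfa_add {β : ℝ} {k : ℕ} (hx : gaussMap^[k] β ≠ 0) :
    gaussMap^[k] β * (cfa β k + gaussMap^[k + 1] β) = 1 := by
  rw [Function.iterate_succ_apply', gaussMap, if_neg hx, cfa]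
  field_simp
  ring

lemma pNum_mul_qDen_sub (β : ℝ) (k : ℕ) :
    (pNum β (k + 1) : ℝ) * qDen β k - pNum β k * qDen β (k + 1) = (-1) ^ (k + 1) := by
  induction k with
  | zero => simp [pNum, qDen]
  | succ k ih =>
    simp only [pNum, qDen, Int.cast_add, Int.cast_mul] at ih ⊢
    linear_combination (-1 : ℝ) * ih

lemma qDen_nonneg_and_le_succ {β : ℝ} (ha : ∀ k, 1 ≤ cfa β k) (k : ℕ) :
    0 ≤ qDen β k ∧ qDen β k ≤ qDen β (k + 1) := by
  induction k with
  | zero => simp [qDen]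
  | succ k ih =>
    have hk1 : 0 ≤ qDen β (k + 1) := ih.1.trans ih.2
    refine ⟨hk1, ?_⟩
    show qDen β (k + 1) ≤ cfa β k * qDen β (k + 1) + qDen β k
    nlinarith [ha k, ih.1]

lemma one_le_qDen {β : ℝ} (ha : ∀ k, 1 ≤ cfa β k) {k : ℕ} (hk : k ≠ 0) : 1 ≤ qDen β k :=
  monotone_nat_of_le_succ (fun k => (qDen_nonneg_and_le_succ ha k).2)
    (Nat.one_le_iff_ne_zero.mpr hk)

lemma qDen_pos {β : ℝ} (hx : ∀ k, gaussMap^[k] β ∈ Ioo 0 1) {k : ℕ} (hk : k ≠ 0) :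
    (0 : ℝ) < qDen β k := by
  exact_mod_cast one_le_qDen (fun k => one_le_cfa_s9 (hx k)) hk

lemma qDen_mul_lt_qDen_succ {β : ℝ} (hx : ∀ k, gaussMap^[k] β ∈ Ioo 0 1) (k : ℕ) :
    (qDen β k : ℝ) * gaussMap^[k] β < qDen β (k + 1) := by
  have hle : (qDen β k : ℝ) ≤ qDen β (k + 1) := by
    exact_mod_cast (qDen_nonneg_and_le_succ (fun k => one_le_cfa_s9 (hx k)) k).2
  have hq := qDen_pos hx k.succ_ne_zero
  obtain ⟨hx0, hx1⟩ := hx k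
  nlinarith [mul_le_mul_of_nonneg_right hle hx0.le]

noncomputable def cfDen (β : ℝ) (k : ℕ) : ℝ := qDen β (k + 1) + qDen β k * gaussMap^[k] β

lemma cfDen_pos {β : ℝ} (hx : ∀ k, gaussMap^[k] β ∈ Ioo 0 1) (k : ℕ) : 0 < cfDen β k := by
  have hq : (0 : ℝ) ≤ qDen β k := by
    exact_mod_cast (qDen_nonneg_and_le_succ (fun k => one_le_cfa_s9 (hx k)) k).1
  have hq1 := qDen_pos hx k.succ_ne_zero
  unfold cfDen
  nlinarith [mul_nonneg hq (hx k).1.le]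

lemma cfDen_lt_two_mul_qDen {β : ℝ} (hx : ∀ k, gaussMap^[k] β ∈ Ioo 0 1) (k : ℕ) :
    cfDen β k < 2 * qDen β (k + 1) := by
  unfold cfDen
  linarith [qDen_mul_lt_qDen_succ hx k]

lemma cfDen_eq_mul_cfDen_succ {β : ℝ} {k : ℕ} (hx : gaussMap^[k] β ≠ 0) :
    cfDen β k = gaussMap^[k] β * cfDen β (k + 1) := by
  simp only [cfDen, qDen, Int.cast_add, Int.cast_mul]
  linear_combination (-(qDen β (k + 1) : ℝ)) * gaussMap_iterate_mul_cfa_add hx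

lemma mul_cfDen_eq {β : ℝ} (hx : ∀ k, gaussMap^[k] β ≠ 0) (k : ℕ) :
    β * cfDen β k = pNum β (k + 1) + pNum β k * gaussMap^[k] β := by
  induction k with
  | zero => simp [cfDen, pNum, qDen]
  | succ k ih =>
    refine mul_left_cancel₀ (hx k) ?_
    simp only [pNum, Int.cast_add, Int.cast_mul]
    rw [cfDen_eq_mul_cfDen_succ (hx k)] at ih
    linear_combination ih - (pNum β (k + 1) : ℝ) * gaussMap_iterate_mul_cfa_add (hx k)

noncomputable def convergentDist (β : ℝ) (k : ℕ) : ℝ := (qDen β k * cfDen β k)⁻¹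

lemma convergentDist_pos {β : ℝ} (hx : ∀ k, gaussMap^[k] β ∈ Ioo 0 1) {k : ℕ} (hk : k ≠ 0) :
    0 < convergentDist β k := by
  have hq := qDen_pos hx hk
  have hD := cfDen_pos hx k
  unfold convergentDist
  positivity

lemma sub_pNum_div_qDen {β : ℝ} (hx : ∀ k, gaussMap^[k] β ∈ Ioo 0 1) {k : ℕ} (hk : k ≠ 0) :
    β - pNum β k / qDen β k = (-1) ^ (k + 1) * convergentDist β k := by
  have hq := (qDen_pos hx hk).ne'
  have hβ := mul_cfDen_eq (fun k => (hx k).1.ne') k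
  have key : (β - pNum β k / qDen β k) * (qDen β k * cfDen β k) = (-1) ^ (k + 1) := by
    calc _ = qDen β k * (β * cfDen β k) - pNum β k * cfDen β k := by field_simp
      _ = _ := by
          rw [hβ, ← pNum_mul_qDen_sub β k, cfDen]
          ring
  rw [convergentDist, ← key, mul_inv_cancel_right₀ (mul_ne_zero hq (cfDen_pos hx k).ne')]

lemma one_div_two_mul_qDen_eq {β : ℝ} (hx : ∀ k, gaussMap^[k] β ∈ Ioo 0 1) {k : ℕ}
    (hk : k ≠ 0) :
    1 / (2 * qDen β k * qDen β (k + 1)) = (convergentDist β k + convergentDist β (k + 1)) / 2 := by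
  have hq := qDen_pos hx hk
  have hq' := qDen_pos hx k.succ_ne_zero
  have hD' := cfDen_pos hx (k + 1)
  have hx0 := (hx k).1
  have hxD : gaussMap^[k] β * cfDen β (k + 1) = qDen β (k + 1) + qDen β k * gaussMap^[k] β :=
    (cfDen_eq_mul_cfDen_succ hx0.ne').symm
  unfold convergentDist
  rw [cfDen_eq_mul_cfDen_succ hx0.ne']
  field_simp
  linear_combination hxD

lemma convergentDist_succ_lt {β : ℝ} (hx : ∀ k, gaussMap^[k] β ∈ Ioo 0 1) {k : ℕ}
    (hk : k ≠ 0) : convergentDist β (k + 1) < convergentDist β k := by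
  have hq := qDen_pos hx hk
  have hD' := cfDen_pos hx (k + 1)
  have hx0 := (hx k).1
  unfold convergentDist
  rw [cfDen_eq_mul_cfDen_succ hx0.ne', ← mul_assoc]
  gcongr
  exact qDen_mul_lt_qDen_succ hx k

lemma one_div_two_mul_qDen_lt_convergentDist {β : ℝ} (hx : ∀ k, gaussMap^[k] β ∈ Ioo 0 1)
    {k : ℕ} (hk : k ≠ 0) : 1 / (2 * qDen β k * qDen β (k + 1)) < convergentDist β k := by
  have hq := qDen_pos hx hk
  have hD := cfDen_pos hx k
  rw [convergentDist, one_div, mul_assoc, mul_left_comm]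
  gcongr
  exact cfDen_lt_two_mul_qDen hx k

lemma sq_half_add_sub_sq_sub_midpoint {β u v s d d' : ℝ} (hs : s ^ 2 = 1)
    (hu : β - u = s * d) (hv : β - v = -s * d') :
    ((d + d') / 2) ^ 2 - (β - (u + v) / 2) ^ 2 = d * d' := by
  have hmid : β - (u + v) / 2 = s * (d - d') / 2 := by linear_combination (hu + hv) / 2
  rw [hmid]
  linear_combination (-(d - d') ^ 2 / 4) * hs

lemma sq_sub_sq_sub_midpoint {β : ℝ} (hx : ∀ k, gaussMap^[k] β ∈ Ioo 0 1) {k : ℕ}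
    (hk : k ≠ 0) :
    (1 / (2 * qDen β k * qDen β (k + 1))) ^ 2 -
        (β - (pNum β k / qDen β k + pNum β (k + 1) / qDen β (k + 1)) / 2) ^ 2 =
      convergentDist β k * convergentDist β (k + 1) := by
  have hv := sub_pNum_div_qDen hx k.succ_ne_zero
  rw [pow_succ, mul_neg_one] at hv
  rw [one_div_two_mul_qDen_eq hx hk]
  exact sq_half_add_sub_sq_sub_midpoint (by rw [← pow_mul, mul_comm, pow_mul]; norm_num)
    (sub_pNum_div_qDen hx hk) hv

lemma sqrt_mul_mem_Ioo {a b : ℝ} (hb : 0 < b) (hba : b < a) :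
    √(a * b) ∈ Ioo b ((a + b) / 2) := by
  constructor
  · rw [Real.lt_sqrt hb.le]
    nlinarith
  · rw [Real.sqrt_lt' (by linarith)]
    nlinarith [sq_pos_of_pos (sub_pos.mpr hba)]

/-- For irrational `β ∈ (0,1)` and `n ≥ 1`, the intersection point `y_n` of the
vertical geodesic at `β` with the semicircular geodesic with endpoints
`p_{n-1}/q_{n-1}` and `p_n/q_n` — whose imaginary part is
`√(r² − (β − c)²)` with `c = (p_{n-1}/q_{n-1} + p_n/q_n)/2` and
`r = 1/(2 q_{n-1} q_n)` — satisfies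
`1/(2 q_n q_{n+1}) < Im y_n < 1/(2 q_{n-1} q_n)`. -/
theorem im_intersection_bounds (β : ℝ) (hβ : Irrational β)
    (h0 : 0 < β) (h1 : β < 1) (n : ℕ) (hn : 1 ≤ n) :
    1 / (2 * (qDen β (n + 1) : ℝ) * (qDen β (n + 2) : ℝ)) <
      Real.sqrt ((1 / (2 * (qDen β n : ℝ) * (qDen β (n + 1) : ℝ))) ^ 2 -
        (β - ((pNum β n : ℝ) / (qDen β n : ℝ) +
          (pNum β (n + 1) : ℝ) / (qDen β (n + 1) : ℝ)) / 2) ^ 2) ∧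
    Real.sqrt ((1 / (2 * (qDen β n : ℝ) * (qDen β (n + 1) : ℝ))) ^ 2 -
        (β - ((pNum β n : ℝ) / (qDen β n : ℝ) +
          (pNum β (n + 1) : ℝ) / (qDen β (n + 1) : ℝ)) / 2) ^ 2) <
      1 / (2 * (qDen β n : ℝ) * (qDen β (n + 1) : ℝ)) := by
  have hx := gaussMap_iterate_mem_Ioo hβ h0 h1
  have hn0 : n ≠ 0 := Nat.one_le_iff_ne_zero.mp hn
  rw [sq_sub_sq_sub_midpoint hx hn0, one_div_two_mul_qDen_eq hx hn0]
  obtain ⟨hlow, hup⟩ :=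
    sqrt_mul_mem_Ioo (convergentDist_pos hx n.succ_ne_zero) (convergentDist_succ_lt hx hn0)
  exact ⟨(one_div_two_mul_qDen_lt_convergentDist hx n.succ_ne_zero).trans hlow, hup⟩
end

section
/- The Gauss–Kuzmin operator is the adjoint of composition with the Gauss map: for all Borel measurable functions f, h : [0,1] → [0,∞], ∫₀¹ (Σ_{k=1}^∞ (x+k)^{−2} f(1/(x+k))) h(x) dx = ∫₀¹ f(x) h(T(x)) dx, where the integrals are with respect to Lebesgue measure. -/
/-!
The inverse branches `ψₖ y = 1 / (y + k)`, `k ≥ 1`, of the Gauss map are injective on `[0, 1)`,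
satisfy `T ∘ ψₖ = id` there, and their images `(1/(k+1), 1/k]` partition `(0, 1]`. Splitting
`∫₀¹ f · (h ∘ T)` along this partition and substituting `x = ψₖ y`, with `|ψₖ'(y)| = (y + k)⁻²`,
turns the `k`-th piece into the integral of the `k`-th term of `(𝓛 f) · h`; monotone convergence
exchanges the sum over `k` with the integral.
-/

open MeasureTheory
open scoped ENNReal

open Set Function

noncomputable def gaussMapInvBranch (k : ℕ) (y : ℝ) : ℝ := 1 / (y + ((k : ℝ) + 1))

namespace gaussMapInvBranch

lemma pos (k : ℕ) {y : ℝ} (hy : 0 ≤ y) : 0 < gaussMapInvBranch k y := by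
  unfold gaussMapInvBranch; positivity

lemma leftInvOn_gaussMap (k : ℕ) : LeftInvOn gaussMap (gaussMapInvBranch k) (Ico 0 1) := by
  intro y hy
  have hfloor : ⌊y + ((k : ℝ) + 1)⌋ = (k : ℤ) + 1 := by
    rw [← Nat.cast_succ, Int.floor_add_natCast, Int.floor_eq_zero_iff.mpr hy, zero_add,
      Nat.cast_succ]
  rw [gaussMap, if_neg (pos k hy.1).ne', gaussMapInvBranch, one_div_one_div, hfloor]
  push_cast; ring

lemma injOn (k : ℕ) : InjOn (gaussMapInvBranch k) (Ico 0 1) :=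
  (leftInvOn_gaussMap k).injOn

lemma hasDerivAt (k : ℕ) {y : ℝ} (hy : y + ((k : ℝ) + 1) ≠ 0) :
    HasDerivAt (gaussMapInvBranch k) (-(1 / (y + ((k : ℝ) + 1)) ^ 2)) y := by
  rw [show gaussMapInvBranch k = (fun x => x + ((k : ℝ) + 1))⁻¹ from funext fun _ => one_div _,
    ← neg_div]
  exact ((hasDerivAt_id' y).add_const _).inv hy

lemma measurableSet_image (k : ℕ) : MeasurableSet (gaussMapInvBranch k '' Ico 0 1) :=
  measurableSet_Ico.image_of_continuousOn_injOn
    (fun y hy => (hasDerivAt k (by linarith [hy.1])).continuousAt.continuousWithinAt) (injOn k)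

lemma pairwise_disjoint_image :
    Pairwise (Disjoint on fun k => gaussMapInvBranch k '' Ico 0 1) := by
  rintro i j hij
  refine disjoint_left.mpr ?_
  rintro _ ⟨y, hy, rfl⟩ ⟨y', hy', heq⟩
  -- applying `gaussMap` to `heq` shows that both points come from the same `y`
  obtain rfl : y' = y := by
    rw [← leftInvOn_gaussMap j hy', heq, leftInvOn_gaussMap i hy]
  simp only [gaussMapInvBranch, one_div, inv_inj, add_right_inj, add_left_inj, Nat.cast_inj] at heq
  exact hij heq.symm

lemma iUnion_image : ⋃ k, gaussMapInvBranch k '' Ico 0 1 = Ioc 0 1 := by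
  apply Subset.antisymm
  · rintro _ ⟨_, ⟨k, rfl⟩, y, hy, rfl⟩
    refine ⟨pos k hy.1, ?_⟩
    rw [gaussMapInvBranch, div_le_one (by linarith [hy.1])]
    linarith [hy.1, (k.cast_nonneg : (0 : ℝ) ≤ k)]
  · rintro x ⟨hx0, hx1⟩
    set n := ⌊1 / x⌋₊
    have hn : 1 ≤ n := Nat.le_floor (by rw [Nat.cast_one, le_div_iff₀ hx0]; linarith)
    have hcast : ((n - 1 : ℕ) : ℝ) + 1 = n := by rw [Nat.cast_sub hn, Nat.cast_one]; ring
    refine mem_iUnion.mpr ⟨n - 1, 1 / x - n, ⟨?_, ?_⟩, ?_⟩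
    · linarith [Nat.floor_le (one_div_pos.mpr hx0).le]
    · linarith [Nat.lt_floor_add_one (1 / x)]
    · rw [gaussMapInvBranch, hcast, sub_add_cancel, one_div_one_div]

lemma lintegral_image (k : ℕ) (F : ℝ → ℝ≥0∞) :
    ∫⁻ x in gaussMapInvBranch k '' Ico 0 1, F x =
      ∫⁻ y in Ico 0 1, ENNReal.ofReal (1 / (y + ((k : ℝ) + 1)) ^ 2) * F (gaussMapInvBranch k y) := by
  rw [lintegral_image_eq_lintegral_abs_deriv_mul measurableSet_Ico
    (fun y hy => (hasDerivAt k (by linarith [hy.1])).hasDerivWithinAt) (injOn k)]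
  refine setLIntegral_congr_fun measurableSet_Ico fun y hy => ?_
  rw [abs_neg, abs_of_nonneg (by have := hy.1; positivity)]

end gaussMapInvBranch

open gaussMapInvBranch in
lemma setLIntegral_Ioc_zero_one_eq_tsum (F : ℝ → ℝ≥0∞) :
    ∫⁻ x in Ioc 0 1, F x =
      ∑' k : ℕ, ∫⁻ y in Ico 0 1,
        ENNReal.ofReal (1 / (y + ((k : ℝ) + 1)) ^ 2) * F (gaussMapInvBranch k y) := by
  rw [← iUnion_image, lintegral_iUnion measurableSet_image pairwise_disjoint_image]
  exact tsum_congr fun k => lintegral_image k F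

/-- The Gauss–Kuzmin operator `(𝓛 f)(x) = ∑_{k≥1} (x+k)⁻² f(1/(x+k))` is the
adjoint of composition with the Gauss map with respect to Lebesgue measure on
`[0,1]`: for all Borel measurable `f, h : [0,1] → [0,∞]`,
`∫₀¹ (𝓛 f)(x) h(x) dx = ∫₀¹ f(x) h(T x) dx`. -/
theorem gaussKuzmin_adjoint (f h : ℝ → ℝ≥0∞) (hf : Measurable f) (hh : Measurable h) :
    ∫⁻ x in Set.Icc (0 : ℝ) 1,
        (∑' k : ℕ, ENNReal.ofReal (1 / (x + ((k : ℝ) + 1)) ^ 2) *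
          f (1 / (x + ((k : ℝ) + 1)))) * h x =
      ∫⁻ x in Set.Icc (0 : ℝ) 1, f x * h (gaussMap x) := by
  have hterm (k : ℕ) : Measurable fun x : ℝ =>
      ENNReal.ofReal (1 / (x + ((k : ℝ) + 1)) ^ 2) * f (1 / (x + ((k : ℝ) + 1))) * h x := by
    fun_prop
  calc _ = ∑' k : ℕ, ∫⁻ x in Icc 0 1,
          ENNReal.ofReal (1 / (x + ((k : ℝ) + 1)) ^ 2) * f (1 / (x + ((k : ℝ) + 1))) * h x := by
        simp_rw [← ENNReal.tsum_mul_right]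
        exact lintegral_tsum fun k => (hterm k).aemeasurable
    _ = ∑' k : ℕ, ∫⁻ y in Ico 0 1, ENNReal.ofReal (1 / (y + ((k : ℝ) + 1)) ^ 2) *
          (f (gaussMapInvBranch k y) * h (gaussMap (gaussMapInvBranch k y))) := by
        refine tsum_congr fun k => ?_
        rw [← setLIntegral_congr Ico_ae_eq_Icc]
        refine setLIntegral_congr_fun measurableSet_Ico fun y hy => ?_
        rw [gaussMapInvBranch.leftInvOn_gaussMap k hy, mul_assoc, gaussMapInvBranch]
    _ = _ := by
        rw [← setLIntegral_Ioc_zero_one_eq_tsum fun x => f x * h (gaussMap x),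
          setLIntegral_congr Ioc_ae_eq_Icc]
end

section
/- Tail bound for the truncated Gauss–Kuzmin operator: let D̄ = {z ∈ ℂ : |z − 1| ≤ 3/2}. For every k ≥ 1 and x ∈ D̄ one has Re(x + k) ≥ k − 1/2 > 0 and 1/(x+k) ∈ D̄. Moreover, for every σ ∈ ℂ with η = Re σ > 1 there exists a constant C > 0 such that for all integers N ≥ 1 and all bounded functions f : D̄ → ℂ, sup_{x∈D̄} | Σ_{k=N+1}^∞ (x+k)^{−σ} f(1/(x+k)) | ≤ C · N^{1−η} · sup_{z∈D̄} |f(z)|, where (x+k)^{−σ} = exp(−σ · Log(x+k)) with Log the principal branch of the logarithm. -/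
/-!
On the disk `D̄ = closedBall 1 (3/2)` every point has real part at least `-1/2`, so `x + k` lies
in the half-plane `Re ≥ 1/2` for `k ≥ 1`, which `z ↦ 1/z` maps into `closedBall 1 1 ⊆ D̄`.
Moreover `‖x + k‖ ≥ k/2`, and the principal power loses at most a factor `exp(π |Im σ|)`
against the real one, so the `k`-th term of the tail is `O(M k^{-η})`; the integral test bounds
`∑_{k>N} k^{-η}` by `∫_N^∞ t^{-η} dt = N^{1-η}/(η-1)`.
-/

open Complex Metric Set Real

lemma sub_le_re_of_mem_closedBall {c x : ℂ} {r : ℝ} (hx : x ∈ closedBall c r) :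
    c.re - r ≤ x.re := by
  have h := (abs_re_le_norm (x - c)).trans (mem_closedBall_iff_norm.1 hx)
  rw [sub_re] at h
  linarith [(abs_le.1 h).1]

lemma one_div_mem_closedBall_one_of_half_le_re {z : ℂ} (hz : 1 / 2 ≤ z.re) :
    1 / z ∈ closedBall (1 : ℂ) 1 := by
  have hz0 : z ≠ 0 := by rintro rfl; norm_num at hz
  -- `Re z ≥ 1/2` says exactly that `z` is at least as close to `1` as to `0`
  have hdist : ‖1 - z‖ ≤ ‖z‖ := by
    rw [← sq_le_sq₀ (norm_nonneg _) (norm_nonneg _), Complex.sq_norm, Complex.sq_norm,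
      normSq_apply, normSq_apply]
    simp only [sub_re, sub_im, one_re, one_im]
    nlinarith
  rw [mem_closedBall_iff_norm, show 1 / z - 1 = (1 - z) / z by field_simp, norm_div,
    div_le_one (norm_pos_iff.2 hz0)]
  exact hdist

lemma norm_cpow_le_exp_mul_rpow (z w : ℂ) :
    ‖z ^ w‖ ≤ Real.exp (π * |w.im|) * ‖z‖ ^ w.re := by
  have harg : -(arg z * w.im) ≤ π * |w.im| := by
    rw [← neg_mul]
    calc -arg z * w.im ≤ |-arg z| * |w.im| := by rw [← abs_mul]; exact le_abs_self _
      _ ≤ π * |w.im| := by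
        rw [abs_neg]; exact mul_le_mul_of_nonneg_right (abs_arg_le_pi z) (abs_nonneg _)
  calc ‖z ^ w‖ ≤ ‖z‖ ^ w.re / Real.exp (arg z * w.im) := norm_cpow_le z w
    _ = Real.exp (-(arg z * w.im)) * ‖z‖ ^ w.re := by rw [Real.exp_neg]; ring
    _ ≤ Real.exp (π * |w.im|) * ‖z‖ ^ w.re := by gcongr

lemma summable_natCast_add_rpow_neg {η : ℝ} (hη : 1 < η) (N : ℕ) :
    Summable fun k : ℕ => ((N + 1 + k : ℕ) : ℝ) ^ (-η) :=
  (Real.summable_nat_rpow.2 (by linarith)).comp_injective fun a b hab => by omega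

lemma tsum_natCast_add_rpow_neg_le {η : ℝ} (hη : 1 < η) {N : ℕ} (hN : 1 ≤ N) :
    ∑' k : ℕ, ((N + 1 + k : ℕ) : ℝ) ^ (-η) ≤ (N : ℝ) ^ (1 - η) / (η - 1) := by
  have hN0 : (0 : ℝ) < N := by exact_mod_cast hN
  have hanti : AntitoneOn (fun t : ℝ => t ^ (-η)) (Ici (N : ℝ)) := fun a ha b _ hab =>
    Real.rpow_le_rpow_of_nonpos (hN0.trans_le ha) hab (by linarith)
  have htest := hanti.tsum_comp_add_le_integral N
    (integrableOn_Ioi_rpow_of_lt (by linarith) hN0)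
    (fun t ht => Real.rpow_nonneg (hN0.trans ht).le _)
  rw [integral_Ioi_rpow_of_lt (by linarith) hN0] at htest
  calc ∑' k : ℕ, ((N + 1 + k : ℕ) : ℝ) ^ (-η)
      = ∑' k : ℕ, ((k + N + 1 : ℕ) : ℝ) ^ (-η) :=
        tsum_congr fun k => by rw [show N + 1 + k = k + N + 1 by ring]
    _ ≤ -(N : ℝ) ^ (-η + 1) / (-η + 1) := htest
    _ = (N : ℝ) ^ (1 - η) / (η - 1) := by
      rw [show -η + 1 = 1 - η by ring, neg_div, ← div_neg, neg_sub]

section Disk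

variable {x : ℂ}

lemma re_add_natCast_ge (hx : x ∈ closedBall (1 : ℂ) (3 / 2)) (k : ℕ) :
    (k : ℝ) - 1 / 2 ≤ (x + k).re := by
  have := sub_le_re_of_mem_closedBall hx
  simp only [add_re, natCast_re, one_re] at this ⊢
  linarith

lemma one_div_add_natCast_mem_closedBall (hx : x ∈ closedBall (1 : ℂ) (3 / 2))
    {k : ℕ} (hk : 1 ≤ k) :
    1 / (x + k) ∈ closedBall (1 : ℂ) (3 / 2) := by
  have hk1 : (1 : ℝ) ≤ k := by exact_mod_cast hk
  refine closedBall_subset_closedBall (by norm_num) (one_div_mem_closedBall_one_of_half_le_re ?_)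
  linarith [re_add_natCast_ge hx k]

lemma norm_add_natCast_cpow_neg_le (hx : x ∈ closedBall (1 : ℂ) (3 / 2))
    {σ : ℂ} (hσ : 0 ≤ σ.re) {k : ℕ} (hk : 1 ≤ k) :
    ‖(x + k) ^ (-σ)‖ ≤ Real.exp (π * |σ.im|) * 2 ^ σ.re * (k : ℝ) ^ (-σ.re) := by
  have hk1 : (1 : ℝ) ≤ k := by exact_mod_cast hk
  have hnorm : (k : ℝ) / 2 ≤ ‖x + k‖ :=
    le_trans (by linarith [re_add_natCast_ge hx k]) (re_le_norm _)
  have hpow : ‖x + k‖ ^ (-σ.re) ≤ ((k : ℝ) / 2) ^ (-σ.re) :=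
    Real.rpow_le_rpow_of_nonpos (by positivity) hnorm (by linarith)
  calc ‖(x + k) ^ (-σ)‖ ≤ Real.exp (π * |σ.im|) * ‖x + k‖ ^ (-σ.re) := by
        simpa only [neg_re, neg_im, abs_neg] using norm_cpow_le_exp_mul_rpow (x + k) (-σ)
    _ ≤ Real.exp (π * |σ.im|) * ((k : ℝ) / 2) ^ (-σ.re) := by gcongr
    _ = Real.exp (π * |σ.im|) * 2 ^ σ.re * (k : ℝ) ^ (-σ.re) := by
      rw [Real.div_rpow (by positivity) zero_le_two, Real.rpow_neg zero_le_two, div_inv_eq_mul]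
      ring

lemma norm_gaussKuzmin_term_le (hx : x ∈ closedBall (1 : ℂ) (3 / 2))
    {σ : ℂ} (hσ : 0 ≤ σ.re) {f : ℂ → ℂ} {M : ℝ}
    (hM : ∀ z ∈ closedBall (1 : ℂ) (3 / 2), ‖f z‖ ≤ M) {k : ℕ} (hk : 1 ≤ k) :
    ‖(x + k) ^ (-σ) * f (1 / (x + k))‖ ≤
      Real.exp (π * |σ.im|) * 2 ^ σ.re * M * (k : ℝ) ^ (-σ.re) := by
  rw [norm_mul, mul_right_comm]
  exact mul_le_mul (norm_add_natCast_cpow_neg_le hx hσ hk)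
    (hM _ (one_div_add_natCast_mem_closedBall hx hk)) (norm_nonneg _) (by positivity)

end Disk

/-- Tail bound for the truncated Gauss–Kuzmin operator on the disk
`D̄ = {z : |z − 1| ≤ 3/2}`: for `k ≥ 1` and `x ∈ D̄` one has
`Re(x + k) ≥ k − 1/2 > 0` and `1/(x+k) ∈ D̄`; and for `Re σ = η > 1` there is
`C > 0` such that for all `N ≥ 1` and all `f` bounded by `M` on `D̄`,
`‖∑_{k>N} (x+k)^{−σ} f(1/(x+k))‖ ≤ C N^{1−η} M` on `D̄` (here `(x+k)^{−σ}` is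
`exp(−σ Log(x+k))` with the principal logarithm, i.e. the principal power). -/
theorem truncated_gaussKuzmin_tail_bound :
    (∀ k : ℕ, 1 ≤ k → ∀ x ∈ Metric.closedBall (1 : ℂ) (3 / 2),
      ((k : ℝ) - 1 / 2 ≤ (x + (k : ℂ)).re ∧ 0 < (k : ℝ) - 1 / 2) ∧
      1 / (x + (k : ℂ)) ∈ Metric.closedBall (1 : ℂ) (3 / 2)) ∧
    (∀ σ : ℂ, 1 < σ.re → ∃ C : ℝ, 0 < C ∧
      ∀ N : ℕ, 1 ≤ N → ∀ f : ℂ → ℂ, ∀ M : ℝ,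
        (∀ z ∈ Metric.closedBall (1 : ℂ) (3 / 2), ‖f z‖ ≤ M) →
        ∀ x ∈ Metric.closedBall (1 : ℂ) (3 / 2),
          ‖∑' k : ℕ, (x + ((N + 1 + k : ℕ) : ℂ)) ^ (-σ) *
              f (1 / (x + ((N + 1 + k : ℕ) : ℂ)))‖ ≤
            C * (N : ℝ) ^ (1 - σ.re) * M) := by
  refine ⟨fun k hk x hx => ⟨⟨re_add_natCast_ge hx k, ?_⟩,
    one_div_add_natCast_mem_closedBall hx hk⟩, fun σ hσ => ?_⟩
  · have : (1 : ℝ) ≤ k := by exact_mod_cast hk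
    linarith
  set A := Real.exp (π * |σ.im|) * 2 ^ σ.re
  refine ⟨A / (σ.re - 1), div_pos (by positivity) (by linarith), fun N hN f M hM x hx => ?_⟩
  have hM0 : 0 ≤ M := (norm_nonneg _).trans (hM 1 (mem_closedBall_self (by norm_num)))
  calc _ ≤ A * M * ∑' k : ℕ, ((N + 1 + k : ℕ) : ℝ) ^ (-σ.re) :=
        tsum_of_norm_bounded ((summable_natCast_add_rpow_neg hσ N).hasSum.mul_left (A * M))
          fun k => norm_gaussKuzmin_term_le hx (by linarith) hM (by omega)
    _ ≤ A * M * ((N : ℝ) ^ (1 - σ.re) / (σ.re - 1)) := by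
        gcongr; exact tsum_natCast_add_rpow_neg_le hσ hN
    _ = A / (σ.re - 1) * (N : ℝ) ^ (1 - σ.re) * M := by ring
end
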